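/- arXiv:1807.09706 — 7 statements merged into one kernel-verified Lean document; each statement's English description precedes it below -/
import Mathlib

section
/- Let c ∈ ℝ and let π : ℝ → [0,∞) be a measurable function that is symmetric and unimodal about c, i.e., π(c − x) = π(c + x) for all x ∈ ℝ and x ↦ π(c + x) is nonincreasing on [0,∞). Let d : ℝ → [0,∞) be measurable, even, and quasiconvex. Then for every x̂ ∈ ℝ, ∫_ℝ d(e − c) π(e) de ≤ ∫_ℝ d(e − x̂) π(e) de, where the integrals are Lebesgue integrals with values in [0,∞]. -/
/-!
The reflection `σ e = c + x̂ - e` preserves Lebesgue measure and exchanges the roles of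
`c` and `x̂`: `σ e - c = -(e - x̂)` and `σ e - x̂ = -(e - c)`. Averaging both integrals over
`e` and `σ e` therefore reduces the claim to the pointwise rearrangement inequality
`d(e - c) π(e) + d(e - x̂) π(σ e) ≤ d(e - x̂) π(e) + d(e - c) π(σ e)`, which holds because
`d` grows and `π(c + ·)` decreases with the absolute value of the argument.
-/

open MeasureTheory Set
open scoped ENNReal

section Abs

variable {α β : Type*} [AddCommGroup α] [LinearOrder α]

theorem Function.Even.apply_abs {f : α → β} (hf : f.Even) (x : α) : f |x| = f x := by
  rcases abs_choice x with h | h <;> rw [h]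
  exact hf x

theorem Function.Even.le_of_abs_le_of_antitoneOn [IsOrderedAddMonoid α] [Preorder β]
    {f : α → β} (hf : f.Even) (hanti : AntitoneOn f (Ici 0)) {x y : α} (h : |x| ≤ |y|) :
    f y ≤ f x := by
  rw [← hf.apply_abs x, ← hf.apply_abs y]
  exact hanti (abs_nonneg x) ((abs_nonneg x).trans h) h

end Abs

theorem QuasiconvexOn.le_of_abs_le_of_even {𝕜 β : Type*} [Field 𝕜] [LinearOrder 𝕜]
    [IsStrictOrderedRing 𝕜] [Preorder β] {f : 𝕜 → β} (hf : QuasiconvexOn 𝕜 univ f)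
    (heven : f.Even) {x y : 𝕜} (h : |x| ≤ |y|) : f x ≤ f y := by
  have hmem : ∀ z ∈ ({-|y|, |y|} : Set 𝕜), z ∈ {z ∈ univ | f z ≤ f y} := by
    rintro z (rfl | rfl)
    · exact ⟨mem_univ _, ((heven _).trans (heven.apply_abs y)).le⟩
    · exact ⟨mem_univ _, (heven.apply_abs y).le⟩
  exact ((hf (f y)).ordConnected.out (hmem _ (.inl rfl)) (hmem _ (.inr rfl)) (abs_le.1 h)).2

section Rearrangement

variable {R : Type*} [CommSemiring R] [PartialOrder R] [CanonicallyOrderedAdd R]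

/-- Unlike `mul_add_mul_le_mul_add_mul`, this needs no additive cancellation, so it holds
in `ℝ≥0∞`. -/
theorem mul_add_mul_le_mul_add_mul_of_canonicallyOrderedAdd {a b c d : R}
    (hab : a ≤ b) (hcd : c ≤ d) : a * d + b * c ≤ a * c + b * d := by
  obtain ⟨b, rfl⟩ := exists_add_of_le hab
  obtain ⟨d, rfl⟩ := exists_add_of_le hcd
  calc a * (c + d) + (a + b) * c = a * c + a * c + a * d + b * c := by ring
    _ ≤ a * c + a * c + a * d + b * c + b * d := le_self_add
    _ = a * c + (a + b) * (c + d) := by ring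

theorem mul_add_mul_le_mul_add_mul_of_abs {α : Type*} [AddCommGroup α] [LinearOrder α]
    [IsOrderedAddMonoid α] {f g : α → R} (hf : ∀ ⦃x y⦄, |x| ≤ |y| → f x ≤ f y)
    (hg : ∀ ⦃x y⦄, |x| ≤ |y| → g y ≤ g x) (u v : α) :
    f u * g u + f v * g v ≤ f v * g u + f u * g v := by
  rcases le_total |u| |v| with h | h
  · simpa only [add_comm, mul_comm] using
      mul_add_mul_le_mul_add_mul_of_canonicallyOrderedAdd (hf h) (hg h)
  · simpa only [add_comm, mul_comm] using
      mul_add_mul_le_mul_add_mul_of_canonicallyOrderedAdd (hf h) (hg h)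

end Rearrangement

theorem MeasureTheory.MeasurePreserving.lintegral_le_lintegral_of_add_comp_le {α : Type*}
    [MeasurableSpace α] {μ : Measure α} {σ : α → α} (hσ : MeasurePreserving σ μ μ)
    (hσemb : MeasurableEmbedding σ) {f g : α → ℝ≥0∞} (hg : Measurable g)
    (h : ∀ a, f a + f (σ a) ≤ g a + g (σ a)) :
    ∫⁻ a, f a ∂μ ≤ ∫⁻ a, g a ∂μ := by
  have h2 : (2 : ℝ≥0∞) * ∫⁻ a, f a ∂μ ≤ 2 * ∫⁻ a, g a ∂μ := calc
    2 * ∫⁻ a, f a ∂μ = ∫⁻ a, f a ∂μ + ∫⁻ a, f (σ a) ∂μ := by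
      rw [hσ.lintegral_comp_emb hσemb, two_mul]
    _ ≤ ∫⁻ a, f a + f (σ a) ∂μ := le_lintegral_add _ _
    _ ≤ ∫⁻ a, g a + g (σ a) ∂μ := lintegral_mono h
    _ = 2 * ∫⁻ a, g a ∂μ := by
      rw [lintegral_add_left hg, hσ.lintegral_comp_emb hσemb, two_mul]
  exact (ENNReal.mul_le_mul_iff_right two_ne_zero ENNReal.ofNat_ne_top).1 h2

theorem su_belief_min_distortion_general (c : ℝ) (π d : ℝ → ℝ)
    (hπmeas : Measurable π)
    (hπsym : ∀ x : ℝ, π (c - x) = π (c + x))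
    (hπmono : AntitoneOn (fun x : ℝ => π (c + x)) (Set.Ici (0 : ℝ)))
    (hdmeas : Measurable d) (hdnn : ∀ x : ℝ, 0 ≤ d x)
    (hdeven : ∀ x : ℝ, d (-x) = d x)
    (hdqc : QuasiconvexOn ℝ Set.univ d) :
    ∀ xhat : ℝ,
      ∫⁻ e : ℝ, ENNReal.ofReal (d (e - c) * π e) ≤
        ∫⁻ e : ℝ, ENNReal.ofReal (d (e - xhat) * π e) := by
  intro xhat
  have hπeven : Function.Even fun u => π (c + u) := fun u => by
    simpa only [sub_eq_add_neg] using hπsym u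
  simp_rw [ENNReal.ofReal_mul (hdnn _)]
  refine
    (Measure.measurePreserving_sub_left volume (c + xhat)).lintegral_le_lintegral_of_add_comp_le
      (MeasurableEquiv.subLeft (c + xhat)).measurableEmbedding (by fun_prop) fun e => ?_
  have hσc : c + xhat - e - c = -(e - xhat) := by ring
  have hσx : c + xhat - e - xhat = -(e - c) := by ring
  have hσ : c + xhat - e = c - (e - xhat) := by ring
  have he : π e = π (c + (e - c)) := by rw [add_sub_cancel]
  rw [hσc, hσx, hdeven, hdeven, hσ, hπsym, he]
  exact mul_add_mul_le_mul_add_mul_of_abs (f := fun u => ENNReal.ofReal (d u))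
    (g := fun u => ENNReal.ofReal (π (c + u)))
    (fun x y h => ENNReal.ofReal_le_ofReal (hdqc.le_of_abs_le_of_even hdeven h))
    (fun x y h => ENNReal.ofReal_le_ofReal (hπeven.le_of_abs_le_of_antitoneOn hπmono h))
    (e - c) (e - xhat)

/-- If `π` is a nonnegative measurable function on `ℝ`, symmetric and unimodal
about `c`, and `d` is a nonnegative measurable even quasiconvex distortion
function, then `c` minimizes `xhat ↦ ∫ d(e - xhat) π(e) de`. -/
theorem su_belief_min_distortion (c : ℝ) (π d : ℝ → ℝ)
    (hπmeas : Measurable π) (hπnn : ∀ x : ℝ, 0 ≤ π x)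
    (hπsym : ∀ x : ℝ, π (c - x) = π (c + x))
    (hπmono : AntitoneOn (fun x : ℝ => π (c + x)) (Set.Ici (0 : ℝ)))
    (hdmeas : Measurable d) (hdnn : ∀ x : ℝ, 0 ≤ d x)
    (hdeven : ∀ x : ℝ, d (-x) = d x)
    (hdqc : QuasiconvexOn ℝ Set.univ d) :
    ∀ xhat : ℝ,
      ∫⁻ e : ℝ, ENNReal.ofReal (d (e - c) * π e) ≤
        ∫⁻ e : ℝ, ENNReal.ofReal (d (e - xhat) * π e) :=
  su_belief_min_distortion_general c π d hπmeas hπsym hπmono hdmeas hdnn hdeven hdqc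
end

section
/- Let π : ℝ → [0,∞) be even and nonincreasing on [0,∞), let φ : ℝ → ℝ be even and quasiconvex, and let q : ℝ → ℝ be nonincreasing with 0 ≤ q(u) ≤ 1 for all u. Then the function e ↦ π(e) · q(φ(e)) is even and nonincreasing on [0,∞). -/
open Set

theorem AntitoneOn.mul_of_nonneg {α M₀ : Type*} [Preorder α] [Mul M₀] [Zero M₀] [Preorder M₀]
    [PosMulMono M₀] [MulPosMono M₀] {f g : α → M₀} {s : Set α} (hf : AntitoneOn f s)
    (hg : AntitoneOn g s) (hf₀ : ∀ x ∈ s, 0 ≤ f x) (hg₀ : ∀ x ∈ s, 0 ≤ g x) :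
    AntitoneOn (f * g) s :=
  fun _ ha _ hb h ↦ mul_le_mul (hf ha hb h) (hg ha hb h) (hg₀ _ hb) (hf₀ _ ha)

theorem QuasiconvexOn.monotoneOn_Ici_of_even {𝕜 β : Type*} [Field 𝕜] [LinearOrder 𝕜]
    [IsStrictOrderedRing 𝕜] [Preorder β] {φ : 𝕜 → β} (hφ : QuasiconvexOn 𝕜 univ φ)
    (heven : φ.Even) : MonotoneOn φ (Ici 0) := by
  intro a ha b _ hab
  have hneg_le : -b ≤ a := by linarith [mem_Ici.mp ha]
  have ha_mem : a ∈ segment 𝕜 (-b) b := Icc_subset_segment ⟨hneg_le, hab⟩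
  exact ((hφ (φ b)).segment_subset ⟨trivial, (heven b).le⟩ ⟨trivial, le_rfl⟩ ha_mem).2

theorem su_times_drop_prob_general (π φ q : ℝ → ℝ)
    (hπnn : ∀ x : ℝ, 0 ≤ π x)
    (hπeven : ∀ x : ℝ, π (-x) = π x)
    (hπmono : AntitoneOn π (Set.Ici (0 : ℝ)))
    (hφeven : ∀ x : ℝ, φ (-x) = φ x)
    (hφqc : QuasiconvexOn ℝ Set.univ φ)
    (hq : Antitone q)
    (hq0 : ∀ u : ℝ, 0 ≤ q u) :
    (∀ x : ℝ, π (-x) * q (φ (-x)) = π x * q (φ x)) ∧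
      AntitoneOn (fun e : ℝ => π e * q (φ e)) (Set.Ici (0 : ℝ)) := by
  have hqφ : AntitoneOn (q ∘ φ) (Ici 0) := hq.comp_monotoneOn (hφqc.monotoneOn_Ici_of_even hφeven)
  exact ⟨Function.Even.mul_even hπeven (Function.Even.left_comp hφeven q),
    hπmono.mul_of_nonneg hqφ (fun x _ ↦ hπnn x) (fun x _ ↦ hq0 (φ x))⟩

/-- If `π` is nonnegative, even and nonincreasing on `[0,∞)`, `φ` is even and
quasiconvex, and `q` is nonincreasing with values in `[0,1]`, then
`e ↦ π e * q (φ e)` is even and nonincreasing on `[0,∞)`. -/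
theorem su_times_drop_prob (π φ q : ℝ → ℝ)
    (hπnn : ∀ x : ℝ, 0 ≤ π x)
    (hπeven : ∀ x : ℝ, π (-x) = π x)
    (hπmono : AntitoneOn π (Set.Ici (0 : ℝ)))
    (hφeven : ∀ x : ℝ, φ (-x) = φ x)
    (hφqc : QuasiconvexOn ℝ Set.univ φ)
    (hq : Antitone q)
    (hq0 : ∀ u : ℝ, 0 ≤ q u) (hq1 : ∀ u : ℝ, q u ≤ 1) :
    (∀ x : ℝ, π (-x) * q (φ (-x)) = π x * q (φ x)) ∧
      AntitoneOn (fun e : ℝ => π e * q (φ e)) (Set.Ici (0 : ℝ)) :=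
  su_times_drop_prob_general π φ q hπnn hπeven hπmono hφeven hφqc hq hq0
end

section
/- Let f, g : ℝ → [0,∞) be Lebesgue-measurable functions, each even (f(−x)=f(x), g(−x)=g(x)) and nonincreasing on [0,∞). Define the convolution h(x) = ∫_ℝ f(x − y) g(y) dy (Lebesgue integral with values in [0,∞]). Then h is even, and h is nonincreasing on [0,∞), i.e., for all 0 ≤ x₁ ≤ x₂, h(x₂) ≤ h(x₁). -/
/-!
Evenness of `h` follows by reflecting `y ↦ -y`. For monotonicity, let `c` be the midpoint of
`x₁ ≤ x₂` and `d = (x₂ - x₁) / 2`. Substituting `y = c + u` and `y = c - u` writes `2 h(x₂)` and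
`2 h(x₁)` as integrals of `f(d∓u) g(c±u)` and of `f(d±u) g(c±u)` respectively. Pointwise the
second dominates by the rearrangement inequality: as `c, d ≥ 0`, the differences
`f(d+u) - f(d-u)` and `g(c+u) - g(c-u)` both have the sign of `-u`.
-/

open MeasureTheory Set

namespace Function.Even

variable {f g : ℝ → ℝ}

theorem apply_abs_s4 (hf : f.Even) (x : ℝ) : f |x| = f x := by
  rcases abs_choice x with h | h
  · rw [h]
  · rw [h, hf]

theorem apply_le_apply_of_abs_le (hf : f.Even) (hmono : AntitoneOn f (Ici 0)) {a b : ℝ}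
    (hab : |a| ≤ |b|) : f b ≤ f a := by
  rw [← hf.apply_abs_s4 a, ← hf.apply_abs_s4 b]
  exact hmono (abs_nonneg a) ((abs_nonneg a).trans hab) hab

theorem apply_add_le_apply_sub (hf : f.Even) (hmono : AntitoneOn f (Ici 0)) {d u : ℝ}
    (hd : 0 ≤ d) (hu : 0 ≤ u) : f (d + u) ≤ f (d - u) :=
  hf.apply_le_apply_of_abs_le hmono <| by
    rw [abs_of_nonneg (add_nonneg hd hu)]
    exact abs_le.mpr ⟨by linarith, by linarith⟩

theorem apply_sub_le_apply_add (hf : f.Even) (hmono : AntitoneOn f (Ici 0)) {d u : ℝ}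
    (hd : 0 ≤ d) (hu : u ≤ 0) : f (d - u) ≤ f (d + u) := by
  simpa only [sub_neg_eq_add, ← sub_eq_add_neg] using
    hf.apply_add_le_apply_sub hmono hd (neg_nonneg.mpr hu)

theorem mul_add_mul_le_mul_add_mul (hf : f.Even) (hg : g.Even) (hfmono : AntitoneOn f (Ici 0))
    (hgmono : AntitoneOn g (Ici 0)) {c d : ℝ} (hc : 0 ≤ c) (hd : 0 ≤ d) (u : ℝ) :
    f (d - u) * g (c + u) + f (d + u) * g (c - u) ≤
      f (d + u) * g (c + u) + f (d - u) * g (c - u) := by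
  rw [add_comm]
  rcases le_total 0 u with hu | hu
  · exact _root_.mul_add_mul_le_mul_add_mul (hf.apply_add_le_apply_sub hfmono hd hu)
      (hg.apply_add_le_apply_sub hgmono hc hu)
  · exact mul_add_mul_le_mul_add_mul' (hf.apply_sub_le_apply_add hfmono hd hu)
      (hg.apply_sub_le_apply_add hgmono hc hu)

end Function.Even

theorem lintegral_ofReal_comp_sub_mul_neg {f g : ℝ → ℝ} (hf : f.Even) (hg : g.Even) (x : ℝ) :
    ∫⁻ y, ENNReal.ofReal (f (-x - y) * g y) = ∫⁻ y, ENNReal.ofReal (f (x - y) * g y) := by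
  rw [← lintegral_neg_eq_self]
  congr! 3 with y
  rw [hg, show -x - -y = -(x - y) by ring, hf]

theorem lintegral_ofReal_comp_sub_mul_add_self {f g : ℝ → ℝ} (hfmeas : Measurable f)
    (hgmeas : Measurable g) (x c : ℝ) :
    (∫⁻ y, ENNReal.ofReal (f (x - y) * g y)) + ∫⁻ y, ENNReal.ofReal (f (x - y) * g y) =
      ∫⁻ u, (ENNReal.ofReal (f (x - c - u) * g (c + u)) +
        ENNReal.ofReal (f (x - c + u) * g (c - u))) := by
  have hshift : ∫⁻ y, ENNReal.ofReal (f (x - y) * g y) =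
      ∫⁻ u, ENNReal.ofReal (f (x - c - u) * g (c + u)) := by
    rw [← lintegral_add_left_eq_self _ c]
    simp only [sub_sub]
  have hreflect : ∫⁻ u, ENNReal.ofReal (f (x - c - u) * g (c + u)) =
      ∫⁻ u, ENNReal.ofReal (f (x - c + u) * g (c - u)) := by
    rw [← lintegral_neg_eq_self]
    simp only [sub_neg_eq_add, ← sub_eq_add_neg]
  rw [lintegral_add_left (by fun_prop), ← hshift, ← hreflect, ← hshift]

/-- Convolution of two nonnegative, even functions that are nonincreasing on
`[0,∞)` is even and nonincreasing on `[0,∞)` (symmetric unimodality is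
preserved under convolution). -/
theorem su_convolution (f g : ℝ → ℝ)
    (hfmeas : Measurable f) (hgmeas : Measurable g)
    (hfnn : ∀ x : ℝ, 0 ≤ f x) (hgnn : ∀ x : ℝ, 0 ≤ g x)
    (hfeven : ∀ x : ℝ, f (-x) = f x) (hgeven : ∀ x : ℝ, g (-x) = g x)
    (hfmono : AntitoneOn f (Set.Ici (0 : ℝ)))
    (hgmono : AntitoneOn g (Set.Ici (0 : ℝ)))
    (h : ℝ → ENNReal)
    (hh : ∀ x : ℝ, h x = ∫⁻ y : ℝ, ENNReal.ofReal (f (x - y) * g y)) :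
    (∀ x : ℝ, h (-x) = h x) ∧
      (∀ x₁ x₂ : ℝ, 0 ≤ x₁ → x₁ ≤ x₂ → h x₂ ≤ h x₁) := by
  refine ⟨fun x => by simp only [hh, lintegral_ofReal_comp_sub_mul_neg hfeven hgeven], ?_⟩
  intro x₁ x₂ hx₁ hx₁₂
  set c := (x₁ + x₂) / 2
  set d := (x₂ - x₁) / 2
  have hc : 0 ≤ c := div_nonneg (by linarith) zero_le_two
  have hd : 0 ≤ d := div_nonneg (sub_nonneg.mpr hx₁₂) zero_le_two
  have hx₂c : x₂ - c = d := by ring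
  have hx₁c : x₁ - c = -d := by ring
  have hsum : h x₂ + h x₂ ≤ h x₁ + h x₁ := by
    rw [hh, hh, lintegral_ofReal_comp_sub_mul_add_self hfmeas hgmeas _ c,
      lintegral_ofReal_comp_sub_mul_add_self hfmeas hgmeas _ c, hx₂c, hx₁c]
    refine lintegral_mono fun u => ?_
    rw [← ENNReal.ofReal_add (mul_nonneg (hfnn _) (hgnn _)) (mul_nonneg (hfnn _) (hgnn _)),
      show -d - u = -(d + u) by ring, show -d + u = -(d - u) by ring, hfeven, hfeven]
    refine (ENNReal.ofReal_le_ofReal ?_).trans ENNReal.ofReal_add_le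
    exact Function.Even.mul_add_mul_le_mul_add_mul hfeven hgeven hfmono hgmono hc hd u
  rw [← two_mul, ← two_mul] at hsum
  exact (ENNReal.mul_le_mul_iff_right two_ne_zero ENNReal.ofNat_ne_top).mp hsum
end

section
/- Let c ∈ ℝ, let M ≥ 0, let π, ξ : ℝ → [0,∞) be measurable with ∫_ℝ π(e) de = ∫_ℝ ξ(e) de = 1, and let φ : ℝ → [0, M] be measurable. Then there exists a function θ : ℝ → [0, M] such that x ↦ θ(c + x) is even and θ is quasiconvex on ℝ, and for every u ∈ ℝ, ∫_{{e : θ(e) ≤ u}} ξ(e) de = ∫_{{e : φ(e) ≤ u}} π(e) de. -/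
/-!
Let `G` be the distribution function of `φ` under `π`, and `F` that of `|e - c|` under `ξ`.
As `ξ` has no atoms, `F` is continuous, so `F (|e - c|)` is uniformly distributed on `[0, 1]`
under `ξ` (probability integral transform). Put `θ e = G⁻¹ (F |e - c|)` with `G⁻¹` the lower
quantile function of `G`. Right-continuity of `G` gives `{θ ≤ u} = {F |e - c| ≤ G u}` for
`u ≥ 0`, a set of `ξ`-mass `G u`. Being a monotone function of `|e - c|`, `θ` is symmetric
about `c` and quasiconvex.
-/

open MeasureTheory

open ProbabilityTheory Set

theorem ProbabilityTheory.continuous_cdf (μ : Measure ℝ) [IsProbabilityMeasure μ]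
    [NullSingletonClass μ] : Continuous (cdf μ) := by
  refine continuous_iff_continuousAt.2 fun x => ?_
  rw [(monotone_cdf μ).continuousAt_iff_leftLim_eq_rightLim, (cdf μ).rightLim_eq]
  have hjump := (cdf μ).measure_singleton x
  rw [measure_cdf, measure_singleton, eq_comm, ENNReal.ofReal_eq_zero, sub_nonpos] at hjump
  exact le_antisymm ((monotone_cdf μ).leftLim_le le_rfl) hjump

/-- The probability integral transform. -/
theorem ProbabilityTheory.measure_setOf_cdf_le (μ : Measure ℝ) [IsProbabilityMeasure μ]
    (hF : Continuous (cdf μ)) {p : ℝ} (hp0 : 0 ≤ p) (hp1 : p ≤ 1) :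
    μ {x | cdf μ x ≤ p} = ENNReal.ofReal p := by
  set S := {x | cdf μ x ≤ p}
  rcases S.eq_empty_or_nonempty with hS | hS
  · have hp : p ≤ 0 := ge_of_tendsto' (tendsto_cdf_atBot μ) fun x =>
      (not_le.1 fun hx => hS.subset hx).le
    simp [hS, le_antisymm hp hp0]
  by_cases hSb : BddAbove S
  · set t := sSup S
    have ht : t ∈ S := (isClosed_le hF continuous_const).csSup_mem hS hSb
    have hSt : S = Iic t :=
      Subset.antisymm (fun x hx => le_csSup hSb hx)
        fun x hx => (monotone_cdf μ hx).trans ht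
    have hpt : p ≤ cdf μ t := by
      refine ge_of_tendsto (hF.continuousWithinAt (s := Ioi t) (x := t)) ?_
      filter_upwards [self_mem_nhdsWithin] with x hx
      exact (not_le.1 fun h => not_le.2 hx (le_csSup hSb h)).le
    rw [hSt, ← ofReal_cdf, le_antisymm ht hpt]
  · have hall : ∀ x, x ∈ S := fun x =>
      let ⟨y, hy, hxy⟩ := not_bddAbove_iff.1 hSb x
      (monotone_cdf μ hxy.le).trans hy
    have hp : 1 ≤ p := le_of_tendsto' (tendsto_cdf_atTop μ) hall
    simp [eq_univ_of_forall hall, le_antisymm hp1 hp]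

noncomputable def nonnegQuantile (G : ℝ → ℝ) (h : ℝ) : ℝ :=
  sInf {v | 0 ≤ v ∧ h ≤ G v}

section nonnegQuantile

variable {h h' M u : ℝ}

theorem nonnegQuantile_nonneg (G : ℝ → ℝ) (h : ℝ) : 0 ≤ nonnegQuantile G h :=
  Real.sInf_nonneg fun _ hv => hv.1

theorem nonnegQuantile_le (G : ℝ → ℝ) (hM : 0 ≤ M) (hhM : h ≤ G M) :
    nonnegQuantile G h ≤ M :=
  csInf_le (s := {v | 0 ≤ v ∧ h ≤ G v}) ⟨0, fun _ hv => hv.1⟩ ⟨hM, hhM⟩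

theorem nonnegQuantile_mono (G : ℝ → ℝ) (hM : 0 ≤ M) (hh : h ≤ h') (hhM : h' ≤ G M) :
    nonnegQuantile G h ≤ nonnegQuantile G h' :=
  csInf_le_csInf (t := {v | 0 ≤ v ∧ h ≤ G v}) ⟨0, fun _ hv => hv.1⟩ ⟨M, hM, hhM⟩
    fun _ hv => ⟨hv.1, hh.trans hv.2⟩

/-- Right-continuity of `G` makes the infimum attained. -/
theorem nonnegQuantile_le_iff {G : StieltjesFunction ℝ} (hM : 0 ≤ M) (hhM : h ≤ G M)
    (hu : 0 ≤ u) :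
    nonnegQuantile G h ≤ u ↔ h ≤ G u := by
  refine ⟨fun hq => ge_of_tendsto (G.right_continuous u |>.mono Ioi_subset_Ici_self) ?_,
    fun hh => csInf_le (s := {v | 0 ≤ v ∧ h ≤ G v}) ⟨0, fun _ hv => hv.1⟩ ⟨hu, hh⟩⟩
  filter_upwards [self_mem_nhdsWithin] with v hv
  obtain ⟨w, hw, hwv⟩ := (csInf_lt_iff (s := {v | 0 ≤ v ∧ h ≤ G v}) ⟨0, fun _ hv => hv.1⟩
    ⟨M, hM, hhM⟩).1 (hq.trans_lt hv)
  exact hw.2.trans (G.mono hwv.le)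

end nonnegQuantile

theorem nullSingletonClass_map_dist (ν : Measure ℝ) [NullSingletonClass ν] (c : ℝ) :
    NullSingletonClass (ν.map (dist · c)) := ⟨fun t => by
  have hd : Measurable (dist · c) := measurable_id.dist measurable_const
  rw [Measure.map_apply hd (measurableSet_singleton t)]
  refine ((countable_singleton (c - t)).insert (c + t)).measure_zero ν |> measure_mono_null ?_
  intro e he
  rcases eq_or_eq_neg_of_abs_eq (show |e - c| = t from he) with h | h
  · exact .inl (by linarith)
  · exact .inr (by rw [mem_singleton_iff]; linarith)⟩

theorem exists_symmetric_quasiconvex_rearrangement (μ ν : Measure ℝ) [IsProbabilityMeasure μ]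
    [IsProbabilityMeasure ν] [NullSingletonClass ν] (c M : ℝ) (φ : ℝ → ℝ) (hφ : Measurable φ)
    (hφM : ∀ e, φ e ∈ Icc 0 M) :
    ∃ θ : ℝ → ℝ, (∀ e, θ e ∈ Icc 0 M) ∧ (∀ x, θ (c - x) = θ (c + x)) ∧
      QuasiconvexOn ℝ univ θ ∧ ∀ u, ν {e | θ e ≤ u} = μ {e | φ e ≤ u} := by
  have hM : 0 ≤ M := (hφM c).1.trans (hφM c).2
  have hd : Measurable (dist · c) := measurable_id.dist measurable_const
  set G := cdf (μ.map φ)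
  set F := cdf (ν.map (dist · c))
  have := Measure.isProbabilityMeasure_map (μ := μ) hφ.aemeasurable
  have := Measure.isProbabilityMeasure_map (μ := ν) hd.aemeasurable
  have hGM : G M = 1 := by
    rw [cdf_eq_real, measureReal_def, Measure.map_apply hφ measurableSet_Iic,
      eq_univ_of_forall (s := φ ⁻¹' Iic M) fun e => (hφM e).2, measure_univ, ENNReal.toReal_one]
  have hGφ (u : ℝ) : ENNReal.ofReal (G u) = μ {e | φ e ≤ u} := by
    rw [ofReal_cdf, Measure.map_apply hφ measurableSet_Iic]; rfl
  have := nullSingletonClass_map_dist ν c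
  have hF : Continuous F := continuous_cdf _
  have hFG (t : ℝ) : F t ≤ G M := hGM ▸ cdf_le_one _ t
  have hmono : Monotone fun t => nonnegQuantile G (F t) := fun s t hst =>
    nonnegQuantile_mono G hM (monotone_cdf _ hst) (hFG t)
  refine ⟨fun e => nonnegQuantile G (F (dist e c)),
    fun e => ⟨nonnegQuantile_nonneg _ _, nonnegQuantile_le G hM (hFG _)⟩,
    fun x => by simp,
    (convexOn_dist c convex_univ).quasiconvexOn.monotone_comp (f := (dist · c)) hmono,
    fun u => ?_⟩
  rcases lt_or_ge u 0 with hu | hu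
  · have hempty {f : ℝ → ℝ} (hf : ∀ e, 0 ≤ f e) : {e | f e ≤ u} = ∅ :=
      eq_empty_of_forall_notMem fun e he => (hf e).not_gt (lt_of_le_of_lt he hu)
    rw [hempty fun _ => nonnegQuantile_nonneg _ _, hempty fun e => (hφM e).1, measure_empty,
      measure_empty]
  · have hlevel :
        {e | nonnegQuantile G (F (dist e c)) ≤ u} = (dist · c) ⁻¹' {t | F t ≤ G u} := by
      ext e
      exact nonnegQuantile_le_iff hM (hFG _) hu
    rw [hlevel, ← Measure.map_apply hd (measurableSet_le hF.measurable measurable_const),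
      measure_setOf_cdf_le _ hF (cdf_nonneg _ _) (cdf_le_one _ _), hGφ]

theorem setIntegral_eq_measureReal_withDensity {α : Type*} [MeasurableSpace α] {μ : Measure α}
    [SFinite μ] {f : α → ℝ} (hf : Integrable f μ) (hf0 : 0 ≤ᵐ[μ] f) (s : Set α) :
    ∫ x in s, f x ∂μ = (μ.withDensity fun x => ENNReal.ofReal (f x)).real s := by
  rw [measureReal_def, withDensity_apply' _ s,
    ← ofReal_integral_eq_lintegral_ofReal hf.integrableOn (ae_restrict_of_ae hf0),
    ENNReal.toReal_ofReal (integral_nonneg_of_ae (ae_restrict_of_ae hf0))]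

theorem isProbabilityMeasure_withDensity_ofReal {α : Type*} [MeasurableSpace α]
    {μ : Measure α} [SFinite μ] {f : α → ℝ} (hf0 : 0 ≤ᵐ[μ] f) (hf1 : ∫ x, f x ∂μ = 1) :
    IsProbabilityMeasure (μ.withDensity fun x => ENNReal.ofReal (f x)) :=
  isProbabilityMeasure_iff_real.2 <| by
    rw [← setIntegral_eq_measureReal_withDensity (integrable_of_integral_eq_one hf1) hf0,
      setIntegral_univ, hf1]

theorem exists_sqc_rearrangement_general (c M : ℝ)
    (π ξ : ℝ → ℝ)
    (hπnn : ∀ x : ℝ, 0 ≤ π x) (hξnn : ∀ x : ℝ, 0 ≤ ξ x)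
    (hπone : ∫ e : ℝ, π e = 1) (hξone : ∫ e : ℝ, ξ e = 1)
    (φ : ℝ → ℝ) (hφmeas : Measurable φ)
    (hφrange : ∀ e : ℝ, φ e ∈ Set.Icc (0 : ℝ) M) :
    ∃ θ : ℝ → ℝ,
      (∀ e : ℝ, θ e ∈ Set.Icc (0 : ℝ) M) ∧
      (∀ x : ℝ, θ (c - x) = θ (c + x)) ∧
      QuasiconvexOn ℝ Set.univ θ ∧
      (∀ u : ℝ, ∫ e in {e : ℝ | θ e ≤ u}, ξ e = ∫ e in {e : ℝ | φ e ≤ u}, π e) := by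
  have hπ0 : 0 ≤ᵐ[volume] π := ae_of_all _ hπnn
  have hξ0 : 0 ≤ᵐ[volume] ξ := ae_of_all _ hξnn
  have := isProbabilityMeasure_withDensity_ofReal hπ0 hπone
  have := isProbabilityMeasure_withDensity_ofReal hξ0 hξone
  obtain ⟨θ, hθM, hθc, hθqc, hθlevel⟩ := exists_symmetric_quasiconvex_rearrangement
    (volume.withDensity fun e => ENNReal.ofReal (π e))
    (volume.withDensity fun e => ENNReal.ofReal (ξ e)) c M φ hφmeas hφrange
  refine ⟨θ, hθM, hθc, hθqc, fun u => ?_⟩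
  rw [setIntegral_eq_measureReal_withDensity (integrable_of_integral_eq_one hξone) hξ0,
    setIntegral_eq_measureReal_withDensity (integrable_of_integral_eq_one hπone) hπ0,
    measureReal_def, measureReal_def, hθlevel]

/-- Every prescription `φ : ℝ → [0, M]` can be rearranged, relative to a pair
of probability densities `(π, ξ)`, into a prescription `θ : ℝ → [0, M]` that is
symmetric about `c` and quasiconvex, with matching lower-level-set masses. -/
theorem exists_sqc_rearrangement (c M : ℝ) (hM : 0 ≤ M)
    (π ξ : ℝ → ℝ)
    (hπmeas : Measurable π) (hξmeas : Measurable ξ)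
    (hπnn : ∀ x : ℝ, 0 ≤ π x) (hξnn : ∀ x : ℝ, 0 ≤ ξ x)
    (hπone : ∫ e : ℝ, π e = 1) (hξone : ∫ e : ℝ, ξ e = 1)
    (φ : ℝ → ℝ) (hφmeas : Measurable φ)
    (hφrange : ∀ e : ℝ, φ e ∈ Set.Icc (0 : ℝ) M) :
    ∃ θ : ℝ → ℝ,
      (∀ e : ℝ, θ e ∈ Set.Icc (0 : ℝ) M) ∧
      (∀ x : ℝ, θ (c - x) = θ (c + x)) ∧
      QuasiconvexOn ℝ Set.univ θ ∧
      (∀ u : ℝ, ∫ e in {e : ℝ | θ e ≤ u}, ξ e = ∫ e in {e : ℝ | φ e ≤ u}, π e) :=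
  exists_sqc_rearrangement_general c M π ξ hπnn hξnn hπone hξone φ hφmeas hφrange
end

section
/- Let μ : ℝ → [0,∞) be Lebesgue-integrable, even, and nonincreasing on [0,∞). Fix y ≥ 0 and a ∈ ℝ, and define G(e) = ∫_{(−∞, y − a·e]} μ(w) dw + ∫_{(−∞, y + a·e]} μ(w) dw. Then G is nonincreasing on [0,∞): for all 0 ≤ e₁ ≤ e₂, G(e₂) ≤ G(e₁). -/
/-!
Writing `F(x) = ∫_{(-∞, x]} μ`, the quantity is `g(t) = F(y - t) + F(y + t)` with `t = a e`, and
`g` is even, so it suffices that `g` is nonincreasing for `t ≥ 0`. For `0 ≤ t₁ ≤ t₂`,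
`g(t₁) - g(t₂)` is the mass of `μ` on `[y - t₂, y - t₁]` minus its mass on `[y + t₁, y + t₂]`.
The reflection `w ↦ 2y - w` maps the second interval onto the first, and since `y ≥ 0` it does
not increase `|w|`, so it does not decrease the symmetric unimodal density `μ`.
-/

open MeasureTheory

section SymmetricUnimodal

variable {μ : ℝ → ℝ} (heven : ∀ x : ℝ, μ (-x) = μ x) (hmono : AntitoneOn μ (Set.Ici (0 : ℝ)))
include heven hmono

theorem apply_le_apply_of_abs_le_abs_of_even {u v : ℝ} (h : |u| ≤ |v|) : μ v ≤ μ u := by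
  have habs : ∀ x, μ |x| = μ x := fun x => by
    rcases abs_choice x with hx | hx <;> rw [hx]
    exact heven x
  rw [← habs u, ← habs v]
  exact hmono (abs_nonneg u) (abs_nonneg v) h

theorem intervalIntegral_le_intervalIntegral_reflect (hint : Integrable μ) {y t₁ t₂ : ℝ}
    (hy : 0 ≤ y) (ht₁ : 0 ≤ t₁) (ht : t₁ ≤ t₂) :
    ∫ w in (y + t₁)..(y + t₂), μ w ≤ ∫ w in (y - t₂)..(y - t₁), μ w := by
  have hreflect : ∫ w in (y - t₂)..(y - t₁), μ w = ∫ w in (y + t₁)..(y + t₂), μ (2 * y - w) := by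
    rw [intervalIntegral.integral_comp_sub_left μ (2 * y)]
    ring_nf
  rw [hreflect]
  refine intervalIntegral.integral_mono_on (by linarith) hint.intervalIntegrable
    (hint.comp_sub_left (2 * y)).intervalIntegrable fun w hw => ?_
  apply apply_le_apply_of_abs_le_abs_of_even heven hmono
  rw [abs_of_nonneg (by linarith [hw.1] : 0 ≤ w), abs_le]
  constructor <;> linarith [hw.1]

theorem antitoneOn_integral_Iic_sub_add_integral_Iic_add (hint : Integrable μ) {y : ℝ}
    (hy : 0 ≤ y) :
    AntitoneOn (fun t : ℝ => (∫ w in Set.Iic (y - t), μ w) + ∫ w in Set.Iic (y + t), μ w)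
      (Set.Ici 0) := by
  intro t₁ ht₁ t₂ _ ht
  have hright : (∫ w in Set.Iic (y + t₂), μ w) - ∫ w in Set.Iic (y + t₁), μ w =
      ∫ w in (y + t₁)..(y + t₂), μ w :=
    intervalIntegral.integral_Iic_sub_Iic hint.integrableOn hint.integrableOn
  have hleft : (∫ w in Set.Iic (y - t₁), μ w) - ∫ w in Set.Iic (y - t₂), μ w =
      ∫ w in (y - t₂)..(y - t₁), μ w :=
    intervalIntegral.integral_Iic_sub_Iic hint.integrableOn hint.integrableOn
  have := intervalIntegral_le_intervalIntegral_reflect heven hmono hint hy ht₁ ht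
  simp only
  linarith

end SymmetricUnimodal

theorem tail_sum_antitone_general (μ : ℝ → ℝ)
    (hint : Integrable μ)
    (heven : ∀ x : ℝ, μ (-x) = μ x)
    (hmono : AntitoneOn μ (Set.Ici (0 : ℝ)))
    (y a : ℝ) (hy : 0 ≤ y) :
    AntitoneOn
      (fun e : ℝ =>
        (∫ w in Set.Iic (y - a * e), μ w) + ∫ w in Set.Iic (y + a * e), μ w)
      (Set.Ici (0 : ℝ)) := by
  set g := fun t : ℝ => (∫ w in Set.Iic (y - t), μ w) + ∫ w in Set.Iic (y + t), μ w
  have hg := antitoneOn_integral_Iic_sub_add_integral_Iic_add heven hmono hint hy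
  have hg_abs : ∀ t, g t = g |t| := fun t => by
    rcases abs_choice t with ht | ht <;>
      simp only [g, ht, sub_neg_eq_add, ← sub_eq_add_neg, add_comm]
  intro e₁ (he₁ : 0 ≤ e₁) e₂ (he₂ : 0 ≤ e₂) he
  change g (a * e₂) ≤ g (a * e₁)
  rw [hg_abs (a * e₁), hg_abs (a * e₂), abs_mul, abs_mul, abs_of_nonneg he₁, abs_of_nonneg he₂]
  exact hg (mul_nonneg (abs_nonneg a) he₁) (mul_nonneg (abs_nonneg a) he₂)
    (mul_le_mul_of_nonneg_left he (abs_nonneg a))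

/-- For an integrable, even noise density `μ` that is nonincreasing on `[0,∞)`,
and any `y ≥ 0`, `a ∈ ℝ`, the function
`e ↦ ∫_{(-∞, y - a e]} μ + ∫_{(-∞, y + a e]} μ` is nonincreasing on `[0,∞)`. -/
theorem tail_sum_antitone (μ : ℝ → ℝ)
    (hint : Integrable μ) (hnn : ∀ x : ℝ, 0 ≤ μ x)
    (heven : ∀ x : ℝ, μ (-x) = μ x)
    (hmono : AntitoneOn μ (Set.Ici (0 : ℝ)))
    (y a : ℝ) (hy : 0 ≤ y) :
    AntitoneOn
      (fun e : ℝ =>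
        (∫ w in Set.Iic (y - a * e), μ w) + ∫ w in Set.Iic (y + a * e), μ w)
      (Set.Ici (0 : ℝ)) :=
  tail_sum_antitone_general μ hint heven hmono y a hy
end

section
/- Consider the finite-horizon dynamic program defined in the context. Then for every t ∈ {0, 1, …, T+1} and every channel state s ∈ S, the value function e ↦ J_t(e, s) is even and quasiconvex on ℝ. -/
/-!
Call `f : ℝ → ℝ` radially monotone if `|x| ≤ |y|` implies `f x ≤ f y`; this is exactly "even and
quasiconvex". The class is stable under `e ↦ f (a * e)`, nonnegative combinations and finite
minima, and, by Anderson's lemma, under convolution with an even density that is nonincreasing on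
`[0, ∞)`: for `0 ≤ e₁ ≤ e₂`, pairing `w` with its mirror image `e₁ + e₂ - w` writes the difference
of the two convolutions as the integral of a product of two factors of equal sign. Backward
induction from `J_{T+1} = 0` then makes every `J_t(·, s)` radially monotone, boundedness being
carried along so that the integrals stay finite.
-/

open MeasureTheory Set

def RadiallyMonotone {β : Type*} [Preorder β] (f : ℝ → β) : Prop :=
  ∀ ⦃x y : ℝ⦄, |x| ≤ |y| → f x ≤ f y

def RadiallyAntitone {β : Type*} [Preorder β] (f : ℝ → β) : Prop :=
  ∀ ⦃x y : ℝ⦄, |x| ≤ |y| → f y ≤ f x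

section Radial

variable {β : Type*}

lemma radiallyMonotone_of_even_of_monotoneOn [Preorder β] {f : ℝ → β} (he : Function.Even f)
    (hm : MonotoneOn f (Ici 0)) : RadiallyMonotone f := by
  have habs : ∀ x, f |x| = f x := fun x => by
    rcases abs_choice x with h | h <;> rw [h]; exact he x
  intro x y h
  rw [← habs x, ← habs y]
  exact hm (abs_nonneg x) (abs_nonneg y) h

lemma radiallyAntitone_of_even_of_antitoneOn [Preorder β] {f : ℝ → β} (he : Function.Even f)
    (hm : AntitoneOn f (Ici 0)) : RadiallyAntitone f :=
  radiallyMonotone_of_even_of_monotoneOn (β := βᵒᵈ) he hm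

lemma RadiallyMonotone.even [PartialOrder β] {f : ℝ → β} (hf : RadiallyMonotone f) :
    Function.Even f := fun x =>
  le_antisymm (hf (abs_neg x).le) (hf (abs_neg x).ge)

lemma radiallyMonotone_iff_even_and_quasiconvexOn [LinearOrder β] {f : ℝ → β} :
    RadiallyMonotone f ↔ Function.Even f ∧ QuasiconvexOn ℝ univ f := by
  refine ⟨fun hf => ⟨hf.even, quasiconvexOn_iff_le_max.2 ⟨convex_univ, ?_⟩⟩, ?_⟩
  · intro x _ y _ α γ hα hγ hαγ
    have hcomb (z : ℝ) (hx : |x| ≤ |z|) (hy : |y| ≤ |z|) : |α • x + γ • y| ≤ |z| :=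
      calc |α • x + γ • y| ≤ α * |x| + γ * |y| := by
            simpa [abs_mul, abs_of_nonneg hα, abs_of_nonneg hγ] using abs_add_le (α * x) (γ * y)
        _ ≤ α * |z| + γ * |z| := by gcongr
        _ = |z| := by rw [← add_mul, hαγ, one_mul]
    rcases le_total |x| |y| with h | h
    · exact (hf (hcomb y h le_rfl)).trans (le_max_right _ _)
    · exact (hf (hcomb x le_rfl h)).trans (le_max_left _ _)
  · rintro ⟨he, hq⟩ x y h
    have hseg : x ∈ segment ℝ (-y) y := by
      rw [segment_eq_uIcc, mem_uIcc]
      obtain ⟨h1, h2⟩ := abs_le.1 h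
      rcases abs_choice y with hy | hy <;> rw [hy] at h1 h2
      · exact .inl ⟨h1, h2⟩
      · exact .inr ⟨by linarith, by linarith⟩
    exact ((hq (f y)).segment_subset ⟨trivial, (he y).le⟩ ⟨trivial, le_rfl⟩ hseg).2

end Radial

lemma RadiallyAntitone.even {μ : ℝ → ℝ} (hμ : RadiallyAntitone μ) : Function.Even μ :=
  RadiallyMonotone.even (β := ℝᵒᵈ) hμ

namespace RadiallyMonotone

variable {g μ : ℝ → ℝ}

lemma monotoneOn (hg : RadiallyMonotone g) : MonotoneOn g (Ici 0) := fun x hx y hy hxy =>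
  hg (by rwa [abs_of_nonneg hx, abs_of_nonneg (mem_Ici.1 hy)])

lemma comp_mul_left (hg : RadiallyMonotone g) (a : ℝ) : RadiallyMonotone fun e => g (a * e) :=
  fun x y h => hg (by rw [abs_mul, abs_mul]; gcongr)

lemma measurable (hg : RadiallyMonotone g) : Measurable g := by
  have hmono : Monotone fun x => g (max x 0) := fun x y hxy =>
    hg.monotoneOn (le_max_right x 0) (le_max_right y 0) (max_le_max_right 0 hxy)
  convert hmono.measurable.comp measurable_abs using 1
  ext x
  have h : |max |x| 0| = |x| := by rw [max_eq_left (abs_nonneg x), abs_abs]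
  exact le_antisymm (hg h.ge) (hg h.le)

lemma exists_forall_norm_le (hg : RadiallyMonotone g) (hgb : BddAbove (range g)) :
    ∃ M, ∀ x, ‖g x‖ ≤ M := by
  obtain ⟨C, hC⟩ := hgb
  refine ⟨max C (-g 0), fun x => abs_le.2 ⟨?_, ?_⟩⟩
  · have : g 0 ≤ g x := hg (by simp)
    linarith [le_max_right C (-g 0)]
  · exact (hC (mem_range_self x)).trans (le_max_left _ _)

lemma integrable_mul (hg : RadiallyMonotone g) (hgb : BddAbove (range g)) (hμ : Integrable μ) :
    Integrable fun w => g w * μ w := by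
  obtain ⟨M, hM⟩ := hg.exists_forall_norm_le hgb
  exact hμ.bdd_mul hg.measurable.aestronglyMeasurable (.of_forall hM)

/-- Both `|e₁ + e₂ - w| ≤ |w|` and `|w - e₂| ≤ |w - e₁|` hold when `e₁ + e₂ ≤ 2 * w`, and both
reverse otherwise, so the two factors have the same sign. -/
lemma mul_sub_comp_reflect_nonneg (hg : RadiallyMonotone g) (hμ : RadiallyAntitone μ) {e₁ e₂ : ℝ}
    (he₁ : 0 ≤ e₁) (he : e₁ ≤ e₂) (w : ℝ) :
    0 ≤ (g w - g (e₁ + e₂ - w)) * (μ (w - e₂) - μ (w - e₁)) := by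
  rcases le_total (e₁ + e₂) (2 * w) with hw | hw
  · have hg' : g (e₁ + e₂ - w) ≤ g w := hg (sq_le_sq.1 (by nlinarith))
    have hμ' : μ (w - e₁) ≤ μ (w - e₂) := hμ (sq_le_sq.1 (by nlinarith))
    exact mul_nonneg (sub_nonneg.2 hg') (sub_nonneg.2 hμ')
  · have hg' : g w ≤ g (e₁ + e₂ - w) := hg (sq_le_sq.1 (by nlinarith))
    have hμ' : μ (w - e₂) ≤ μ (w - e₁) := hμ (sq_le_sq.1 (by nlinarith))
    exact mul_nonneg_of_nonpos_of_nonpos (sub_nonpos.2 hg') (sub_nonpos.2 hμ')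

/-- Anderson's lemma on `ℝ`. -/
lemma integral_comp_add_mul (hg : RadiallyMonotone g) (hgb : BddAbove (range g))
    (hμ : RadiallyAntitone μ) (hμi : Integrable μ) :
    RadiallyMonotone fun e => ∫ w, g (e + w) * μ w := by
  have hshift (e : ℝ) : ∫ w, g (e + w) * μ w = ∫ w, g w * μ (w - e) := by
    rw [← integral_sub_right_eq_self _ e]
    simp only [add_sub_cancel]
  refine radiallyMonotone_of_even_of_monotoneOn (fun e => ?_) fun e₁ he₁ e₂ _ he => ?_
  · rw [← integral_neg_eq_self]
    simp only [← neg_add, hg.even _, hμ.even _]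
  set φ : ℝ → ℝ := fun w => g w * (μ (w - e₂) - μ (w - e₁))
  have hint (e : ℝ) : Integrable fun w => g w * μ (w - e) := by
    simpa [mul_comm] using hg.integrable_mul hgb (hμi.comp_sub_right e)
  have hdiff : (∫ w, g (e₂ + w) * μ w) - ∫ w, g (e₁ + w) * μ w = ∫ w, φ w := by
    rw [hshift, hshift, ← integral_sub (hint e₂) (hint e₁)]
    simp only [φ, mul_sub]
  have hφ : Integrable φ := by
    simp only [φ, mul_sub]
    exact (hint e₂).sub (hint e₁)
  have hreflect : ∫ w, φ (e₁ + e₂ - w) = ∫ w, φ w := integral_sub_left_eq_self φ volume _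
  have hsum : 0 ≤ ∫ w, (φ w + φ (e₁ + e₂ - w)) := by
    refine integral_nonneg fun w => show 0 ≤ _ from ?_
    have h₁ : μ (e₁ + e₂ - w - e₂) = μ (w - e₁) := by rw [← hμ.even]; ring_nf
    have h₂ : μ (e₁ + e₂ - w - e₁) = μ (w - e₂) := by rw [← hμ.even]; ring_nf
    have := hg.mul_sub_comp_reflect_nonneg hμ (mem_Ici.1 he₁) he w
    simp only [φ, h₁, h₂]
    linarith
  rw [integral_add hφ (hφ.comp_sub_left _), hreflect, ← hdiff] at hsum
  simpa using hsum

lemma bddAbove_range_integral_comp_add_mul (hg : RadiallyMonotone g) (hgb : BddAbove (range g))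
    (hμi : Integrable μ) : BddAbove (range fun e => ∫ w, g (e + w) * μ w) := by
  obtain ⟨M, hM⟩ := hg.exists_forall_norm_le hgb
  refine ⟨∫ w, M * ‖μ w‖, forall_mem_range.2 fun e =>
    (Real.le_norm_self _).trans (norm_integral_le_of_norm_le (hμi.norm.const_mul M) ?_)⟩
  refine .of_forall fun w => ?_
  rw [norm_mul]
  exact mul_le_mul_of_nonneg_right (hM _) (norm_nonneg _)

end RadiallyMonotone

section Bellman

variable {n : ℕ} (a : ℝ) (U : Finset ℝ) (hU : U.Nonempty) (μ d lam : ℝ → ℝ) (p : Fin n → ℝ → ℝ)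
  (Q : Fin n → Fin n → ℝ)

/-- The paper's `H̄_t(e, s, u)`, with `K` in place of `J_{t+1}`. -/
noncomputable def bellmanQ (K : ℝ → Fin n → ℝ) (s : Fin n) (u e : ℝ) : ℝ :=
  lam u + (∑ s', Q s s' * p s' u) * d e +
    ∑ s', Q s s' * ((1 - p s' u) * (∫ w, K w s' * μ w) + p s' u * ∫ w, K (a * e + w) s' * μ w)

noncomputable def bellman (K : ℝ → Fin n → ℝ) (e : ℝ) (s : Fin n) : ℝ :=
  U.inf' hU fun u => bellmanQ a μ d lam p Q K s u e

variable {a U hU μ d lam p Q} {K : ℝ → Fin n → ℝ}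

lemma radiallyMonotone_bellmanQ (hK : ∀ s, RadiallyMonotone (K · s))
    (hKb : ∀ s, BddAbove (range (K · s))) (hμ : RadiallyAntitone μ) (hμi : Integrable μ)
    (hd : RadiallyMonotone d) (hQ : ∀ i j, 0 ≤ Q i j) {u : ℝ} (hp : ∀ s, 0 ≤ p s u) (s : Fin n) :
    RadiallyMonotone (bellmanQ a μ d lam p Q K s u) := by
  intro x y h
  have hA : 0 ≤ ∑ s', Q s s' * p s' u := Finset.sum_nonneg fun s' _ => mul_nonneg (hQ s s') (hp s')
  have hI (s' : Fin n) := ((hK s').integral_comp_add_mul (hKb s') hμ hμi).comp_mul_left a h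
  unfold bellmanQ
  gcongr _ + _ * ?_ + ∑ s' ∈ _, _ * (_ + _ * ?_) with s'
  · exact hd h
  · exact hQ s s'
  · exact hp s'
  · exact hI s'

lemma bddAbove_range_bellmanQ (hK : ∀ s, RadiallyMonotone (K · s))
    (hKb : ∀ s, BddAbove (range (K · s))) (hμi : Integrable μ) (hdb : BddAbove (range d))
    (hQ : ∀ i j, 0 ≤ Q i j) {u : ℝ} (hp : ∀ s, 0 ≤ p s u) (s : Fin n) :
    BddAbove (range (bellmanQ a μ d lam p Q K s u)) := by
  obtain ⟨Cd, hCd⟩ := hdb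
  choose C hC using fun s' => (hK s').bddAbove_range_integral_comp_add_mul (hKb s') hμi
  have hA : 0 ≤ ∑ s', Q s s' * p s' u := Finset.sum_nonneg fun s' _ => mul_nonneg (hQ s s') (hp s')
  refine ⟨lam u + (∑ s', Q s s' * p s' u) * Cd +
    ∑ s', Q s s' * ((1 - p s' u) * (∫ w, K w s' * μ w) + p s' u * C s'),
    forall_mem_range.2 fun e => ?_⟩
  unfold bellmanQ
  gcongr _ + _ * ?_ + ∑ s' ∈ _, _ * (_ + _ * ?_) with s'
  · exact hCd (mem_range_self e)
  · exact hQ s s'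
  · exact hp s'
  · exact hC s' (mem_range_self (a * e))

lemma radiallyMonotone_bellman (hK : ∀ s, RadiallyMonotone (K · s))
    (hKb : ∀ s, BddAbove (range (K · s))) (hμ : RadiallyAntitone μ) (hμi : Integrable μ)
    (hd : RadiallyMonotone d) (hQ : ∀ i j, 0 ≤ Q i j) (hp : ∀ s, ∀ u ∈ U, 0 ≤ p s u) (s : Fin n) :
    RadiallyMonotone (bellman a U hU μ d lam p Q K · s) := fun _ _ h =>
  Finset.le_inf' _ _ fun u hu => Finset.inf'_le_of_le _ hu <|
    radiallyMonotone_bellmanQ hK hKb hμ hμi hd hQ (hp · u hu) s h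

lemma bddAbove_range_bellman (hK : ∀ s, RadiallyMonotone (K · s))
    (hKb : ∀ s, BddAbove (range (K · s))) (hμi : Integrable μ) (hdb : BddAbove (range d))
    (hQ : ∀ i j, 0 ≤ Q i j) (hp : ∀ s, ∀ u ∈ U, 0 ≤ p s u) (s : Fin n) :
    BddAbove (range (bellman a U hU μ d lam p Q K · s)) := by
  obtain ⟨u, hu⟩ := hU
  obtain ⟨C, hC⟩ := bddAbove_range_bellmanQ hK hKb hμi hdb hQ (hp · u hu) s
  exact ⟨C, forall_mem_range.2 fun e => Finset.inf'_le_of_le _ hu (hC (mem_range_self e))⟩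

end Bellman

theorem value_function_even_quasiconvex_general
    (T n : ℕ) (a : ℝ)
    (U : Finset ℝ) (hU0 : (0 : ℝ) ∈ U)
    (μ : ℝ → ℝ)
    (hμone : ∫ x : ℝ, μ x = 1)
    (hμeven : ∀ x : ℝ, μ (-x) = μ x)
    (hμmono : AntitoneOn μ (Set.Ici (0 : ℝ)))
    (d : ℝ → ℝ)
    (hdbd : ∃ C : ℝ, ∀ x : ℝ, d x ≤ C)
    (hdeven : ∀ x : ℝ, d (-x) = d x)
    (hdqc : QuasiconvexOn ℝ Set.univ d)
    (lam : ℝ → ℝ)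
    (p : Fin n → ℝ → ℝ)
    (hp01 : ∀ s : Fin n, ∀ u ∈ U, p s u ∈ Set.Icc (0 : ℝ) 1)
    (Q : Fin n → Fin n → ℝ)
    (hQnn : ∀ i j : Fin n, 0 ≤ Q i j)
    (J : ℕ → ℝ → Fin n → ℝ)
    (Hbar : ℕ → ℝ → Fin n → ℝ → ℝ)
    (hHbar : ∀ (t : ℕ) (e : ℝ) (s : Fin n) (u : ℝ),
      Hbar t e s u =
        lam u + (∑ s' : Fin n, Q s s' * p s' u) * d e +
          ∑ s' : Fin n, Q s s' *
            ((1 - p s' u) * (∫ w : ℝ, J (t + 1) w s' * μ w) +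
              p s' u * (∫ w : ℝ, J (t + 1) (a * e + w) s' * μ w)))
    (hJT : ∀ (e : ℝ) (s : Fin n), J (T + 1) e s = 0)
    (hJrec : ∀ t ≤ T, ∀ (e : ℝ) (s : Fin n),
      J t e s = U.inf' ⟨0, hU0⟩ (Hbar t e s)) :
    ∀ t ≤ T + 1, ∀ s : Fin n,
      (∀ x : ℝ, J t (-x) s = J t x s) ∧
        QuasiconvexOn ℝ Set.univ (fun e : ℝ => J t e s) := by
  have hμi : Integrable μ := .of_integral_ne_zero (by simp [hμone])
  have hμ : RadiallyAntitone μ := radiallyAntitone_of_even_of_antitoneOn hμeven hμmono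
  have hd : RadiallyMonotone d := radiallyMonotone_iff_even_and_quasiconvexOn.2 ⟨hdeven, hdqc⟩
  have hdb : BddAbove (range d) := let ⟨C, hC⟩ := hdbd; ⟨C, forall_mem_range.2 hC⟩
  have hp (s : Fin n) (u : ℝ) (hu : u ∈ U) : 0 ≤ p s u := (hp01 s u hu).1
  have hJ (t : ℕ) (ht : t ≤ T) : J t = bellman a U ⟨0, hU0⟩ μ d lam p Q (J (t + 1)) := by
    ext e s
    rw [hJrec t ht]
    exact congrArg _ (funext (hHbar t e s))
  have key (t : ℕ) (ht : t ≤ T + 1) :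
      ∀ s, RadiallyMonotone (J t · s) ∧ BddAbove (range (J t · s)) := by
    induction ht using Nat.decreasingInduction with
    | self => simp only [hJT]; exact fun _ => ⟨fun _ _ _ => le_rfl, ⟨0, by rintro _ ⟨_, rfl⟩; rfl⟩⟩
    | of_succ t ht ih =>
      rw [hJ t (Nat.lt_succ_iff.1 ht)]
      obtain ⟨hK, hKb⟩ := forall_and.1 ih
      exact fun s => ⟨radiallyMonotone_bellman hK hKb hμ hμi hd hQnn hp s,
        bddAbove_range_bellman hK hKb hμi hdb hQnn hp s⟩
  intro t ht s
  exact radiallyMonotone_iff_even_and_quasiconvexOn.1 (key t ht s).1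

/-- Part 1 of Theorem 4 of the paper: in the finite-horizon dynamic program for
a first-order autoregressive source over a Markovian packet-drop channel, for
every time `t ≤ T+1` and channel state `s`, the value function `e ↦ J t e s`
is even and quasiconvex. -/
theorem value_function_even_quasiconvex
    (T n : ℕ) (a : ℝ)
    (U : Finset ℝ) (hU0 : (0 : ℝ) ∈ U) (hUnn : ∀ u ∈ U, (0 : ℝ) ≤ u)
    (μ : ℝ → ℝ) (hμmeas : Measurable μ) (hμnn : ∀ x : ℝ, 0 ≤ μ x)
    (hμone : ∫ x : ℝ, μ x = 1)
    (hμeven : ∀ x : ℝ, μ (-x) = μ x)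
    (hμmono : AntitoneOn μ (Set.Ici (0 : ℝ)))
    (d : ℝ → ℝ) (hdmeas : Measurable d) (hdnn : ∀ x : ℝ, 0 ≤ d x)
    (hdbd : ∃ C : ℝ, ∀ x : ℝ, d x ≤ C)
    (hdeven : ∀ x : ℝ, d (-x) = d x)
    (hdqc : QuasiconvexOn ℝ Set.univ d) (hd0 : d 0 = 0)
    (lam : ℝ → ℝ) (hlam_mono : MonotoneOn lam U) (hlam0 : lam 0 = 0)
    (hlamnn : ∀ u ∈ U, 0 ≤ lam u)
    (p : Fin n → ℝ → ℝ)
    (hp0 : ∀ s : Fin n, p s 0 = 1)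
    (hp01 : ∀ s : Fin n, ∀ u ∈ U, p s u ∈ Set.Icc (0 : ℝ) 1)
    (hpu : ∀ s : Fin n, ∀ u ∈ U, ∀ v ∈ U, u ≤ v → p s v ≤ p s u)
    (Q : Fin n → Fin n → ℝ)
    (hQnn : ∀ i j : Fin n, 0 ≤ Q i j)
    (hQrow : ∀ i : Fin n, ∑ j : Fin n, Q i j = 1)
    (J : ℕ → ℝ → Fin n → ℝ)
    (Hbar : ℕ → ℝ → Fin n → ℝ → ℝ)
    (hHbar : ∀ (t : ℕ) (e : ℝ) (s : Fin n) (u : ℝ),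
      Hbar t e s u =
        lam u + (∑ s' : Fin n, Q s s' * p s' u) * d e +
          ∑ s' : Fin n, Q s s' *
            ((1 - p s' u) * (∫ w : ℝ, J (t + 1) w s' * μ w) +
              p s' u * (∫ w : ℝ, J (t + 1) (a * e + w) s' * μ w)))
    (hJT : ∀ (e : ℝ) (s : Fin n), J (T + 1) e s = 0)
    (hJrec : ∀ t ≤ T, ∀ (e : ℝ) (s : Fin n),
      J t e s = U.inf' ⟨0, hU0⟩ (Hbar t e s)) :
    ∀ t ≤ T + 1, ∀ s : Fin n,
      (∀ x : ℝ, J t (-x) s = J t x s) ∧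
        QuasiconvexOn ℝ Set.univ (fun e : ℝ => J t e s) :=
  value_function_even_quasiconvex_general T n a U hU0 μ hμone hμeven hμmono d hdbd hdeven hdqc lam p
    hp01 Q hQnn J Hbar hHbar hJT hJrec
end

section
/- Consider the finite-horizon dynamic program defined in the context. Then for every t ∈ {0, 1, …, T} and every channel state s ∈ S, there exists an optimal prescription f : ℝ → U — i.e., a function satisfying H̄_t(e, s, f(e)) = min_{u ∈ U} H̄_t(e, s, u) for every e ∈ ℝ — that is even and quasiconvex. -/
/-!
Backward induction on the value functions: every `J t · s` is bounded, measurable and a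
nondecreasing function of `|e|`. Averaging such a function against the symmetric unimodal noise
density preserves this shape, so each `Hbar t · s u` inherits it. The `e`-dependent part of
`Hbar t e s u` is `∑ s', Q s s' * p s' u * (d e + ∫ w, J (t + 1) (a * e + w) s' * μ w)`, a
combination of functions nondecreasing in `|e|` with weights nonincreasing in `u`, so `Hbar` has
decreasing differences. By Topkis' theorem the largest minimizer is then nondecreasing in `|e|`,
hence even and quasiconvex.
-/

open MeasureTheory Set

theorem apply_abs_of_even {g : ℝ → ℝ} (heven : ∀ x, g (-x) = g x) (x : ℝ) : g |x| = g x := by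
  rcases abs_choice x with hx | hx <;> simp only [hx, heven]

def AbsMonotone (g : ℝ → ℝ) : Prop := ∀ ⦃x y : ℝ⦄, |x| ≤ |y| → g x ≤ g y

def AbsAntitone (g : ℝ → ℝ) : Prop := ∀ ⦃x y : ℝ⦄, |x| ≤ |y| → g y ≤ g x

namespace AbsMonotone

variable {g : ℝ → ℝ}

theorem even (hg : AbsMonotone g) (x : ℝ) : g (-x) = g x :=
  le_antisymm (hg (abs_neg x).le) (hg (abs_neg x).ge)

theorem monotoneOn (hg : AbsMonotone g) : MonotoneOn g (Ici 0) := fun x hx y hy hxy =>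
  hg (by rwa [abs_of_nonneg hx, abs_of_nonneg hy])

theorem of_even_of_monotoneOn (heven : ∀ x, g (-x) = g x) (hmono : MonotoneOn g (Ici 0)) :
    AbsMonotone g := by
  intro x y hxy
  rw [← apply_abs_of_even heven x, ← apply_abs_of_even heven y]
  exact hmono (abs_nonneg x) (abs_nonneg y) hxy

theorem comp_mul_left (hg : AbsMonotone g) (c : ℝ) : AbsMonotone fun x => g (c * x) :=
  fun x y hxy => hg <| by
    rw [abs_mul, abs_mul]
    exact mul_le_mul_of_nonneg_left hxy (abs_nonneg c)

theorem quasiconvexOn (hg : AbsMonotone g) : QuasiconvexOn ℝ univ g := by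
  intro r
  rw [convex_iff_ordConnected]
  refine ⟨fun x hx y hy z hz => ⟨mem_univ z, ?_⟩⟩
  rcases le_total |x| |y| with hxy | hxy
  · exact (hg ((abs_le_max_abs_abs hz.1 hz.2).trans_eq (max_eq_right hxy))).trans hy.2
  · exact (hg ((abs_le_max_abs_abs hz.1 hz.2).trans_eq (max_eq_left hxy))).trans hx.2

end AbsMonotone

theorem QuasiconvexOn.absMonotone_of_even {g : ℝ → ℝ} (hg : QuasiconvexOn ℝ univ g)
    (heven : ∀ x, g (-x) = g x) : AbsMonotone g := by
  refine AbsMonotone.of_even_of_monotoneOn heven fun x hx y _ hxy => ?_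
  have hsub : segment ℝ (-y) y ⊆ {z | z ∈ univ ∧ g z ≤ g y} :=
    (hg (g y)).segment_subset ⟨mem_univ _, (heven y).le⟩ ⟨mem_univ _, le_rfl⟩
  rw [segment_eq_Icc (by linarith [mem_Ici.1 hx])] at hsub
  exact (hsub ⟨by linarith [mem_Ici.1 hx], hxy⟩).2

theorem AbsAntitone.even {g : ℝ → ℝ} (hg : AbsAntitone g) (x : ℝ) : g (-x) = g x :=
  le_antisymm (hg (abs_neg x).ge) (hg (abs_neg x).le)

theorem AbsAntitone.of_even_of_antitoneOn {g : ℝ → ℝ} (heven : ∀ x, g (-x) = g x)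
    (hanti : AntitoneOn g (Ici 0)) : AbsAntitone g := fun x y hxy =>
  neg_le_neg_iff.1 <|
    AbsMonotone.of_even_of_monotoneOn (g := fun x => -g x) (fun x => by rw [heven]) hanti.neg hxy

theorem AbsMonotone.sub_mul_sub_nonneg {g μ : ℝ → ℝ} (hg : AbsMonotone g) (hμ : AbsAntitone μ)
    {e₁ e₂ : ℝ} (he₁ : 0 ≤ e₁) (he : e₁ ≤ e₂) (w : ℝ) :
    0 ≤ (g (e₂ + w) - g (e₁ + w)) * (μ w - μ (e₁ + e₂ + w)) := by
  rcases le_total 0 (e₁ + e₂ + 2 * w) with hw | hw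
  · exact mul_nonneg (sub_nonneg.2 (hg (sq_le_sq.1 (by nlinarith))))
      (sub_nonneg.2 (hμ (sq_le_sq.1 (by nlinarith))))
  · exact mul_nonneg_of_nonpos_of_nonpos (sub_nonpos.2 (hg (sq_le_sq.1 (by nlinarith))))
      (sub_nonpos.2 (hμ (sq_le_sq.1 (by nlinarith))))

/-- For `0 ≤ e₁ ≤ e₂`, pairing `w` with its reflection `-(e₁ + e₂) - w` turns
the integrand of the difference into the nonnegative product of `sub_mul_sub_nonneg`. -/
theorem AbsMonotone.integral_comp_add_mul {g μ : ℝ → ℝ} (hg : AbsMonotone g)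
    (hμ : AbsAntitone μ) (hint : ∀ e, Integrable fun w => g (e + w) * μ w) :
    AbsMonotone fun e => ∫ w, g (e + w) * μ w := by
  refine AbsMonotone.of_even_of_monotoneOn (fun e => ?_) fun e₁ he₁ e₂ _ he => ?_
  · rw [← integral_neg_eq_self]
    congr 1 with w
    rw [← neg_add, hg.even, hμ.even]
  set φ := fun w => (g (e₂ + w) - g (e₁ + w)) * μ w
  have hφ : Integrable φ := by simpa only [φ, sub_mul, Pi.sub_def] using (hint e₂).sub (hint e₁)
  have hreflect : ∀ w, φ w + φ (-(e₁ + e₂) - w) =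
      (g (e₂ + w) - g (e₁ + w)) * (μ w - μ (e₁ + e₂ + w)) := fun w => by
    simp only [φ]
    rw [show e₂ + (-(e₁ + e₂) - w) = -(e₁ + w) by ring,
      show e₁ + (-(e₁ + e₂) - w) = -(e₂ + w) by ring,
      show -(e₁ + e₂) - w = -(e₁ + e₂ + w) by ring, hg.even, hg.even, hμ.even]
    ring
  have hφ_nonneg : 0 ≤ 2 * ∫ w, φ w := calc
    0 ≤ ∫ w, (φ w + φ (-(e₁ + e₂) - w)) := integral_nonneg fun w =>
        (hreflect w).symm ▸ hg.sub_mul_sub_nonneg hμ (mem_Ici.1 he₁) he w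
    _ = 2 * ∫ w, φ w := by
        rw [integral_add hφ (hφ.comp_sub_left _), integral_sub_left_eq_self]
        ring
  have hφ_eq : ∫ w, φ w = (∫ w, g (e₂ + w) * μ w) - ∫ w, g (e₁ + w) * μ w := by
    rw [← integral_sub (hint e₂) (hint e₁)]
    simp only [φ, sub_mul]
  linarith

structure IsBddAbsMonotone (g : ℝ → ℝ) : Prop where
  absMonotone : AbsMonotone g
  measurable : Measurable g
  bdd : ∃ K, ∀ x, |g x| ≤ K

namespace IsBddAbsMonotone

variable {g : ℝ → ℝ}

theorem const (c : ℝ) : IsBddAbsMonotone fun _ => c :=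
  ⟨fun _ _ _ => le_rfl, measurable_const, |c|, fun _ => le_rfl⟩

theorem add {h : ℝ → ℝ} (hg : IsBddAbsMonotone g) (hh : IsBddAbsMonotone h) :
    IsBddAbsMonotone fun x => g x + h x := by
  obtain ⟨K, hK⟩ := hg.bdd
  obtain ⟨L, hL⟩ := hh.bdd
  exact ⟨fun x y hxy => add_le_add (hg.absMonotone hxy) (hh.absMonotone hxy),
    hg.measurable.add hh.measurable,
    K + L, fun x => (abs_add_le _ _).trans (add_le_add (hK x) (hL x))⟩

theorem comp_mul_left (hg : IsBddAbsMonotone g) (c : ℝ) :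
    IsBddAbsMonotone fun x => g (c * x) := by
  obtain ⟨K, hK⟩ := hg.bdd
  exact ⟨hg.absMonotone.comp_mul_left c, hg.measurable.comp (measurable_const_mul c),
    K, fun x => hK (c * x)⟩

theorem const_add_sum_mul {ι : Type*} [Fintype ι] (c : ℝ) {w : ι → ℝ} {G : ι → ℝ → ℝ}
    (hw : ∀ i, 0 ≤ w i) (hG : ∀ i, IsBddAbsMonotone (G i)) :
    IsBddAbsMonotone fun x => c + ∑ i, w i * G i x := by
  choose K hK using fun i => (hG i).bdd
  have hGm := fun i => (hG i).measurable
  refine ⟨fun x y hxy => add_le_add le_rfl (Finset.sum_le_sum fun i _ =>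
      mul_le_mul_of_nonneg_left ((hG i).absMonotone hxy) (hw i)),
    by fun_prop, |c| + ∑ i, w i * K i, fun x => ?_⟩
  refine (abs_add_le _ _).trans (add_le_add le_rfl ((Finset.abs_sum_le_sum_abs _ _).trans
    (Finset.sum_le_sum fun i _ => ?_)))
  rw [abs_mul, abs_of_nonneg (hw i)]
  exact mul_le_mul_of_nonneg_left (hK i x) (hw i)

theorem finset_inf' {ι : Type*} {s : Finset ι} (hs : s.Nonempty) {F : ι → ℝ → ℝ}
    (hF : ∀ i ∈ s, IsBddAbsMonotone (F i)) :
    IsBddAbsMonotone fun x => s.inf' hs fun i => F i x := by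
  obtain ⟨K, hK⟩ : ∃ K, ∀ i ∈ s, ∀ x, |F i x| ≤ K := by
    choose! K hK using fun i hi => (hF i hi).bdd
    exact ⟨s.sup' hs K, fun i hi x => (hK i hi x).trans (s.le_sup' K hi)⟩
  refine ⟨fun x y hxy => s.le_inf' hs _ fun i hi =>
      (s.inf'_le _ hi).trans ((hF i hi).absMonotone hxy), ?_, K, fun x => ?_⟩
  · have hfun : (fun x => s.inf' hs fun i => F i x) = s.inf' hs F :=
      funext fun x => (s.inf'_apply hs F x).symm
    rw [hfun]
    exact s.inf'_induction hs F (fun _ hf _ hg => hf.inf hg) fun i hi => (hF i hi).measurable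
  · obtain ⟨i, hi, heq⟩ := s.exists_mem_eq_inf' hs fun i => F i x
    exact heq ▸ hK i hi x

theorem integral_comp_add_mul {μ : ℝ → ℝ} (hg : IsBddAbsMonotone g) (hμm : Measurable μ)
    (hμi : Integrable μ) (hμ₀ : ∀ x, 0 ≤ μ x) (hμ : AbsAntitone μ) :
    IsBddAbsMonotone fun e => ∫ w, g (e + w) * μ w := by
  obtain ⟨K, hK⟩ := hg.bdd
  have hint : ∀ e, Integrable fun w => g (e + w) * μ w := fun e =>
    hμi.bdd_mul (hg.measurable.comp (measurable_const_add e)).aestronglyMeasurable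
      (ae_of_all _ fun w => hK (e + w))
  refine ⟨hg.absMonotone.integral_comp_add_mul hμ hint, ?_, ∫ w, K * μ w, fun e => ?_⟩
  · have hgm := hg.measurable
    have hF : Measurable fun q : ℝ × ℝ => g (q.1 + q.2) * μ q.2 := by fun_prop
    exact hF.stronglyMeasurable.integral_prod_right'.measurable
  · refine Real.norm_eq_abs _ ▸
      norm_integral_le_of_norm_le (hμi.const_mul K) (ae_of_all _ fun w => ?_)
    rw [Real.norm_eq_abs, abs_mul, abs_of_nonneg (hμ₀ w)]
    exact mul_le_mul_of_nonneg_right (hK _) (hμ₀ w)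

end IsBddAbsMonotone

def DecreasingDifferencesOn {α β : Type*} [Preorder α] [Preorder β] (H : α → β → ℝ) (S : Set α)
    (U : Set β) : Prop :=
  ∀ ⦃e₁⦄, e₁ ∈ S → ∀ ⦃e₂⦄, e₂ ∈ S → e₁ ≤ e₂ → ∀ ⦃v⦄, v ∈ U → ∀ ⦃u⦄, u ∈ U → v ≤ u →
    H e₂ u + H e₁ v ≤ H e₁ u + H e₂ v

theorem decreasingDifferencesOn_const_add_sum_mul {α β ι : Type*} [Preorder α] [Preorder β]
    [Fintype ι] {S : Set α} {U : Set β} (c : β → ℝ) {w : ι → β → ℝ} {G : ι → α → ℝ}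
    (hw : ∀ i, AntitoneOn (w i) U) (hG : ∀ i, MonotoneOn (G i) S) :
    DecreasingDifferencesOn (fun e u => c u + ∑ i, w i u * G i e) S U := by
  intro e₁ he₁ e₂ he₂ he v hv u hu hvu
  have hterm : ∀ i, w i u * G i e₂ + w i v * G i e₁ ≤ w i u * G i e₁ + w i v * G i e₂ :=
    fun i => by
      nlinarith [mul_nonneg (sub_nonneg.2 (hw i hv hu hvu)) (sub_nonneg.2 (hG i he₁ he₂ he))]
  have hsum := Finset.sum_le_sum fun i (_ : i ∈ Finset.univ) => hterm i
  simp only [Finset.sum_add_distrib] at hsum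
  linarith

/-- Topkis' monotone selection theorem over a finite chain of actions: the largest minimizer is
monotone, since if it dropped from `e₁` to `e₂`, decreasing differences would make the larger
minimizer at `e₁` a minimizer at `e₂` as well. -/
theorem DecreasingDifferencesOn.exists_monotoneOn_argmin {α β : Type*} [Preorder α]
    [LinearOrder β] {H : α → β → ℝ} {S : Set α} {U : Finset β} (hU : U.Nonempty)
    (hH : DecreasingDifferencesOn H S U) :
    ∃ f : α → β, (∀ e, f e ∈ U ∧ H e (f e) = U.inf' hU (H e)) ∧ MonotoneOn f S := by
  classical
  set argmin := fun e => U.filter fun u => H e u = U.inf' hU (H e)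
  have hne : ∀ e, (argmin e).Nonempty := fun e => by
    obtain ⟨u, hu, heq⟩ := U.exists_mem_eq_inf' hU (H e)
    exact ⟨u, Finset.mem_filter.2 ⟨hu, heq.symm⟩⟩
  set f := fun e => (argmin e).max' (hne e)
  have hmem : ∀ e, f e ∈ argmin e := fun e => Finset.max'_mem _ _
  refine ⟨f, fun e => Finset.mem_filter.1 (hmem e), fun e₁ he₁ e₂ he₂ he => ?_⟩
  by_contra! hlt
  obtain ⟨hu, hu_min⟩ := Finset.mem_filter.1 (hmem e₁)
  obtain ⟨hv, hv_min⟩ := Finset.mem_filter.1 (hmem e₂)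
  have hle : H e₁ (f e₁) ≤ H e₁ (f e₂) := hu_min ▸ U.inf'_le _ hv
  have hdd := hH he₁ he₂ he hv hu hlt.le
  have hmem₂ : f e₁ ∈ argmin e₂ :=
    Finset.mem_filter.2 ⟨hu, le_antisymm (by linarith) (U.inf'_le _ hu)⟩
  exact hlt.not_ge (Finset.le_max' _ _ hmem₂)

theorem DecreasingDifferencesOn.exists_even_quasiconvexOn_argmin {H : ℝ → ℝ → ℝ}
    {U : Finset ℝ} (hU : U.Nonempty) (heven : ∀ u ∈ U, ∀ e, H (-e) u = H e u)
    (hH : DecreasingDifferencesOn H (Ici 0) U) :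
    ∃ f : ℝ → ℝ, (∀ e, f e ∈ U) ∧ (∀ e, H e (f e) = U.inf' hU (H e)) ∧
      (∀ x, f (-x) = f x) ∧ QuasiconvexOn ℝ univ f := by
  obtain ⟨f₀, hf₀, hmono⟩ := hH.exists_monotoneOn_argmin hU
  have hf : AbsMonotone fun e => f₀ |e| := fun x y hxy =>
    hmono (abs_nonneg x) (abs_nonneg y) hxy
  have habs : ∀ u ∈ U, ∀ e, H |e| u = H e u := fun u hu =>
    apply_abs_of_even (g := fun e => H e u) (heven u hu)
  refine ⟨fun e => f₀ |e|, fun e => (hf₀ |e|).1, fun e => ?_, hf.even, hf.quasiconvexOn⟩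
  rw [← habs _ (hf₀ |e|).1, (hf₀ |e|).2]
  exact U.inf'_congr hU rfl fun u hu => habs u hu e

theorem bellman_isBddAbsMonotone_decreasingDifferencesOn {n : ℕ} {a : ℝ} {U : Finset ℝ}
    {μ d lam : ℝ → ℝ} {p : Fin n → ℝ → ℝ} {Q : Fin n → Fin n → ℝ} {V : ℝ → Fin n → ℝ} {s : Fin n}
    {H : ℝ → ℝ → ℝ} (hμm : Measurable μ) (hμi : Integrable μ) (hμ₀ : ∀ x, 0 ≤ μ x)
    (hμ : AbsAntitone μ) (hd : IsBddAbsMonotone d) (hp₀ : ∀ s', ∀ u ∈ U, 0 ≤ p s' u)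
    (hpu : ∀ s', AntitoneOn (p s') U) (hQ : ∀ s', 0 ≤ Q s s')
    (hV : ∀ s', IsBddAbsMonotone fun e => V e s')
    (hH : ∀ e u, H e u =
      lam u + (∑ s', Q s s' * p s' u) * d e +
        ∑ s', Q s s' * ((1 - p s' u) * (∫ w, V w s' * μ w) +
          p s' u * (∫ w, V (a * e + w) s' * μ w))) :
    (∀ u ∈ U, IsBddAbsMonotone fun e => H e u) ∧ DecreasingDifferencesOn H (Ici 0) U := by
  set G : Fin n → ℝ → ℝ := fun s' e => d e + ∫ w, V (a * e + w) s' * μ w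
  have hG : ∀ s', IsBddAbsMonotone (G s') := fun s' =>
    hd.add (((hV s').integral_comp_add_mul hμm hμi hμ₀ hμ).comp_mul_left a)
  obtain rfl : H = fun e u => (lam u + ∑ s', Q s s' * ((1 - p s' u) * ∫ w, V w s' * μ w)) +
      ∑ s', Q s s' * p s' u * G s' e := by
    funext e u
    simp only [hH, G, Finset.sum_mul, add_assoc, ← Finset.sum_add_distrib]
    exact congrArg _ (Finset.sum_congr rfl fun _ _ => by ring)
  exact ⟨fun u hu => .const_add_sum_mul _ (fun s' => mul_nonneg (hQ s') (hp₀ s' u hu)) hG,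
    decreasingDifferencesOn_const_add_sum_mul _
      (fun s' _ hu _ hv huv => mul_le_mul_of_nonneg_left (hpu s' hu hv huv) (hQ s'))
      fun s' => (hG s').absMonotone.monotoneOn⟩

theorem exists_even_quasiconvex_optimal_prescription_general
    (T n : ℕ) (a : ℝ)
    (U : Finset ℝ) (hU0 : (0 : ℝ) ∈ U)
    (μ : ℝ → ℝ) (hμmeas : Measurable μ) (hμnn : ∀ x : ℝ, 0 ≤ μ x)
    (hμone : ∫ x : ℝ, μ x = 1)
    (hμeven : ∀ x : ℝ, μ (-x) = μ x)
    (hμmono : AntitoneOn μ (Set.Ici (0 : ℝ)))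
    (d : ℝ → ℝ) (hdmeas : Measurable d) (hdnn : ∀ x : ℝ, 0 ≤ d x)
    (hdbd : ∃ C : ℝ, ∀ x : ℝ, d x ≤ C)
    (hdeven : ∀ x : ℝ, d (-x) = d x)
    (hdqc : QuasiconvexOn ℝ Set.univ d)
    (lam : ℝ → ℝ)
    (p : Fin n → ℝ → ℝ)
    (hp01 : ∀ s : Fin n, ∀ u ∈ U, p s u ∈ Set.Icc (0 : ℝ) 1)
    (hpu : ∀ s : Fin n, ∀ u ∈ U, ∀ v ∈ U, u ≤ v → p s v ≤ p s u)
    (Q : Fin n → Fin n → ℝ)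
    (hQnn : ∀ i j : Fin n, 0 ≤ Q i j)
    (J : ℕ → ℝ → Fin n → ℝ)
    (Hbar : ℕ → ℝ → Fin n → ℝ → ℝ)
    (hHbar : ∀ (t : ℕ) (e : ℝ) (s : Fin n) (u : ℝ),
      Hbar t e s u =
        lam u + (∑ s' : Fin n, Q s s' * p s' u) * d e +
          ∑ s' : Fin n, Q s s' *
            ((1 - p s' u) * (∫ w : ℝ, J (t + 1) w s' * μ w) +
              p s' u * (∫ w : ℝ, J (t + 1) (a * e + w) s' * μ w)))
    (hJT : ∀ (e : ℝ) (s : Fin n), J (T + 1) e s = 0)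
    (hJrec : ∀ t ≤ T, ∀ (e : ℝ) (s : Fin n),
      J t e s = U.inf' ⟨0, hU0⟩ (Hbar t e s)) :
    ∀ t ≤ T, ∀ s : Fin n,
      ∃ f : ℝ → ℝ,
        (∀ e : ℝ, f e ∈ U) ∧
        (∀ e : ℝ, Hbar t e s (f e) = U.inf' ⟨0, hU0⟩ (Hbar t e s)) ∧
        (∀ x : ℝ, f (-x) = f x) ∧
        QuasiconvexOn ℝ Set.univ f := by
  have hμi : Integrable μ := by
    by_contra h
    rw [integral_undef h] at hμone
    exact zero_ne_one hμone
  obtain ⟨C, hC⟩ := hdbd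
  have hd : IsBddAbsMonotone d :=
    ⟨hdqc.absMonotone_of_even hdeven, hdmeas, C,
      fun x => (abs_of_nonneg (hdnn x)).trans_le (hC x)⟩
  have hstep : ∀ t, (∀ s', IsBddAbsMonotone fun e => J (t + 1) e s') → ∀ s,
      (∀ u ∈ U, IsBddAbsMonotone fun e => Hbar t e s u) ∧
        DecreasingDifferencesOn (Hbar t · s) (Ici 0) U := fun t hV s =>
    bellman_isBddAbsMonotone_decreasingDifferencesOn hμmeas hμi hμnn
      (.of_even_of_antitoneOn hμeven hμmono) hd (fun s u hu => (hp01 s u hu).1) hpu (hQnn s) hV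
      (hHbar t · s ·)
  have hJ : ∀ t ≤ T + 1, ∀ s, IsBddAbsMonotone fun e => J t e s := by
    intro t ht
    induction ht using Nat.decreasingInduction with
    | self => simpa only [hJT] using fun _ => .const 0
    | of_succ t ht ih =>
      simpa only [hJrec t (Nat.le_of_lt_succ ht)] using
        fun s => IsBddAbsMonotone.finset_inf' _ (hstep t ih s).1
  intro t ht s
  obtain ⟨hH, hdd⟩ := hstep t (hJ (t + 1) (by omega)) s
  exact hdd.exists_even_quasiconvexOn_argmin _ fun u hu => (hH u hu).absMonotone.even

/-- Part 3 of Theorem 4 of the paper: in the finite-horizon dynamic program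
(with a stochastically monotone channel transition matrix and drop probability
nonincreasing in the channel state), at every time `t ≤ T` and channel state
`s` there exists an optimal prescription `f : ℝ → U` (achieving the minimum of
`H̄_t(e, s, ·)` at every error `e`) that is even and quasiconvex. -/
theorem exists_even_quasiconvex_optimal_prescription
    (T n : ℕ) (a : ℝ)
    (U : Finset ℝ) (hU0 : (0 : ℝ) ∈ U) (hUnn : ∀ u ∈ U, (0 : ℝ) ≤ u)
    (μ : ℝ → ℝ) (hμmeas : Measurable μ) (hμnn : ∀ x : ℝ, 0 ≤ μ x)
    (hμone : ∫ x : ℝ, μ x = 1)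
    (hμeven : ∀ x : ℝ, μ (-x) = μ x)
    (hμmono : AntitoneOn μ (Set.Ici (0 : ℝ)))
    (d : ℝ → ℝ) (hdmeas : Measurable d) (hdnn : ∀ x : ℝ, 0 ≤ d x)
    (hdbd : ∃ C : ℝ, ∀ x : ℝ, d x ≤ C)
    (hdeven : ∀ x : ℝ, d (-x) = d x)
    (hdqc : QuasiconvexOn ℝ Set.univ d) (hd0 : d 0 = 0)
    (lam : ℝ → ℝ) (hlam_mono : MonotoneOn lam U) (hlam0 : lam 0 = 0)
    (hlamnn : ∀ u ∈ U, 0 ≤ lam u)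
    (p : Fin n → ℝ → ℝ)
    (hp0 : ∀ s : Fin n, p s 0 = 1)
    (hp01 : ∀ s : Fin n, ∀ u ∈ U, p s u ∈ Set.Icc (0 : ℝ) 1)
    (hpu : ∀ s : Fin n, ∀ u ∈ U, ∀ v ∈ U, u ≤ v → p s v ≤ p s u)
    (Q : Fin n → Fin n → ℝ)
    (hQnn : ∀ i j : Fin n, 0 ≤ Q i j)
    (hQrow : ∀ i : Fin n, ∑ j : Fin n, Q i j = 1)
    (hQmono : ∀ i j : Fin n, j ≤ i → ∀ ℓ : Fin n,
      ∑ k ∈ Finset.univ.filter (fun k : Fin n => ℓ ≤ k), Q j k ≤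
        ∑ k ∈ Finset.univ.filter (fun k : Fin n => ℓ ≤ k), Q i k)
    (hps : ∀ u ∈ U, ∀ s s' : Fin n, s ≤ s' → p s' u ≤ p s u)
    (J : ℕ → ℝ → Fin n → ℝ)
    (Hbar : ℕ → ℝ → Fin n → ℝ → ℝ)
    (hHbar : ∀ (t : ℕ) (e : ℝ) (s : Fin n) (u : ℝ),
      Hbar t e s u =
        lam u + (∑ s' : Fin n, Q s s' * p s' u) * d e +
          ∑ s' : Fin n, Q s s' *
            ((1 - p s' u) * (∫ w : ℝ, J (t + 1) w s' * μ w) +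
              p s' u * (∫ w : ℝ, J (t + 1) (a * e + w) s' * μ w)))
    (hJT : ∀ (e : ℝ) (s : Fin n), J (T + 1) e s = 0)
    (hJrec : ∀ t ≤ T, ∀ (e : ℝ) (s : Fin n),
      J t e s = U.inf' ⟨0, hU0⟩ (Hbar t e s)) :
    ∀ t ≤ T, ∀ s : Fin n,
      ∃ f : ℝ → ℝ,
        (∀ e : ℝ, f e ∈ U) ∧
        (∀ e : ℝ, Hbar t e s (f e) = U.inf' ⟨0, hU0⟩ (Hbar t e s)) ∧
        (∀ x : ℝ, f (-x) = f x) ∧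
        QuasiconvexOn ℝ Set.univ f :=
  exists_even_quasiconvex_optimal_prescription_general T n a U hU0 μ hμmeas hμnn hμone hμeven hμmono
    d hdmeas hdnn hdbd hdeven hdqc lam p hp01 hpu Q hQnn J Hbar hHbar hJT hJrec
end
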